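/- arXiv:1307.2559 — 6 statements merged into one kernel-verified Lean document; each statement's English description precedes it below -/
import Mathlib

section
/- Let (X_t) be a stochastic process over a bounded state space S ⊆ ℝ≥0, adapted to its natural filtration, with first hitting time T_0 := min{t : X_t = 0} satisfying E[T_0 | X_0] < ∞. If E[X_t − X_{t+1} | F_t; X_t > 0] ≥ δ for some δ > 0, then E[T_0 | X_0] ≤ X_0/δ. -/
/-!
Since `T = ∑ₖ 1{k < T}`, one has `E[T | F₀] = ∑ₖ P(k < T | F₀)`, so it suffices to bound the
partial sums. Backward induction on the horizon `j` gives `δ · E[∑_{k<j} 1{n+k < T} | Fₙ] ≤ Xₙ`: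
by the tower property the step reduces to `δ · P(n < T | Fₙ) + E[X_{n+1} | Fₙ] ≤ Xₙ`, which is the
drift condition on the `Fₙ`-measurable event where the drift is at least `δ`; off that event the
sum vanishes, because `{n < T}` lies in it up to a null set. The event `{n < T}` itself need not be
`Fₙ`-measurable (it also asks that `X` hit `0` eventually, as `sInf ∅ = 0`), so `T` is never used
as a stopping time.
-/

open MeasureTheory Finset

theorem Nat.lt_sInf_iff {s : Set ℕ} {k : ℕ} : k < sInf s ↔ s.Nonempty ∧ ∀ j ≤ k, j ∉ s := by
  refine ⟨fun h => ⟨Nat.nonempty_of_pos_sInf (k.zero_le.trans_lt h),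
    fun j hj => Nat.notMem_of_lt_sInf (hj.trans_lt h)⟩, fun ⟨hs, hk⟩ => ?_⟩
  by_contra! h
  exact hk _ h (Nat.sInf_mem hs)

namespace MeasureTheory

theorem measurable_nat_sInf_setOf {Ω : Type*} [MeasurableSpace Ω] {p : ℕ → Ω → Prop}
    (hp : ∀ t, MeasurableSet {ω | p t ω}) : Measurable fun ω => sInf {t | p t ω} := by
  refine measurable_of_Ioi fun k => ?_
  simp only [Set.preimage, Set.mem_Ioi, Nat.lt_sInf_iff, Set.Nonempty, Set.mem_ofPred_eq,
    Set.ofPred_and, Set.ofPred_forall, Set.ofPred_exists]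
  exact (MeasurableSet.iUnion hp).inter (.iInter fun t => .iInter fun (_ : t ≤ k) => (hp t).compl)

variable {Ω : Type*} {m m0 : MeasurableSpace Ω} {μ : Measure Ω}

theorem condExp_ae_eq_indicator_condExp {s : Set Ω} {f : Ω → ℝ} (hs : MeasurableSet[m] s)
    (hf : Integrable f μ) (hfs : ∀ᵐ ω ∂μ, ω ∉ s → f ω = 0) :
    μ[f | m] =ᵐ[μ] s.indicator (μ[f | m]) := by
  have hf_eq : f =ᵐ[μ] s.indicator f := by
    filter_upwards [hfs] with ω hω
    by_cases h : ω ∈ s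
    · rw [Set.indicator_of_mem h]
    · rw [Set.indicator_of_notMem h, hω h]
  exact (condExp_congr_ae hf_eq).trans (condExp_indicator hf hs)

theorem condExp_natCast_ae_eq_tsum {N : Ω → ℕ} (hN : Measurable N)
    (hNint : Integrable (fun ω => (N ω : ℝ)) μ) :
    μ[fun ω => (N ω : ℝ) | m] =ᵐ[μ]
      fun ω => ∑' k, μ[{ω | k < N ω}.indicator 1 | m] ω := by
  set f : ℕ → Ω → ℝ := fun k => {ω | k < N ω}.indicator 1
  have hf_nonneg : ∀ k ω, 0 ≤ f k ω := fun k => Set.indicator_nonneg fun _ _ => zero_le_one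
  have hf_meas : ∀ k, StronglyMeasurable (f k) := fun k =>
    stronglyMeasurable_const.indicator (hN measurableSet_Ioi)
  have hsum : ∀ ω, HasSum (fun k => f k ω) (N ω) := by
    intro ω
    have h := hasSum_sum_of_ne_finset_zero (f := fun k => f k ω) (s := range (N ω))
      (L := .unconditional ℕ) fun k hk => by simp_all [f]
    simpa [f, Set.indicator_apply, Finset.filter_true_of_mem] using h
  have hfin : ∑' k, ∫⁻ ω, ‖f k ω‖ₑ ∂μ ≠ ⊤ := by
    rw [← lintegral_tsum fun k => (hf_meas k).measurable.enorm.aemeasurable]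
    convert hNint.hasFiniteIntegral.ne using 3 with ω
    simp_rw [Real.enorm_of_nonneg (hf_nonneg _ ω)]
    rw [← ENNReal.ofReal_tsum_of_nonneg (hf_nonneg · ω) (hsum ω).summable, (hsum ω).tsum_eq,
      Real.enorm_natCast, ENNReal.ofReal_natCast]
  calc μ[fun ω => (N ω : ℝ) | m] = μ[fun ω => ∑' k, f k ω | m] := by
        simp_rw [(hsum _).tsum_eq]
    _ =ᵐ[μ] _ := condExp_tsum (fun k => (hf_meas k).aestronglyMeasurable) hfin

theorem mul_condExp_add_indicator_le_of_drift [IsFiniteMeasure μ] {m₁ m₂ : MeasurableSpace Ω}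
    (h₁₂ : m₁ ≤ m₂) (h₂ : m₂ ≤ m0) {X Y S : Ω → ℝ} (hXm : StronglyMeasurable[m₁] X)
    (hXint : Integrable X μ) (hYint : Integrable Y μ) (hXnn : 0 ≤ᵐ[μ] X) {E : Set Ω}
    (hEm : MeasurableSet[m0] E) (hSint : Integrable S μ) (hSE : ∀ ω ∉ E, S ω = 0) {δ : ℝ}
    (hδ : 0 ≤ δ) (hdrift : ∀ᵐ ω ∂μ, ω ∈ E → δ ≤ μ[X - Y | m₁] ω)
    (hS : ∀ᵐ ω ∂μ, δ * μ[S | m₂] ω ≤ Y ω) :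
    ∀ᵐ ω ∂μ, δ * μ[S + E.indicator 1 | m₁] ω ≤ X ω := by
  have hIint : Integrable (E.indicator (1 : Ω → ℝ)) μ := (integrable_const 1).indicator hEm
  set D := {ω | δ ≤ μ[X - Y | m₁] ω}
  have hD : MeasurableSet[m₁] D :=
    measurableSet_le measurable_const stronglyMeasurable_condExp.measurable
  have hvanish : ∀ᵐ ω ∂μ, ω ∉ D → (S + E.indicator (1 : Ω → ℝ)) ω = 0 := by
    filter_upwards [hdrift] with ω hω hωD
    have hωE : ω ∉ E := fun h => hωD (hω h)
    rw [Pi.add_apply, hSE ω hωE, Set.indicator_of_notMem hωE, add_zero]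
  have hsub : μ[X - Y | m₁] =ᵐ[μ] X - μ[Y | m₁] := by
    have h := condExp_sub hXint hYint m₁
    rwa [condExp_of_stronglyMeasurable (h₁₂.trans h₂) hXm hXint] at h
  have hmono : μ[δ • μ[S | m₂] | m₁] ≤ᵐ[μ] μ[Y | m₁] :=
    condExp_mono (integrable_condExp.smul δ) hYint (by filter_upwards [hS] with ω hω using hω)
  have hIle : ∀ᵐ ω ∂μ, μ[E.indicator (1 : Ω → ℝ) | m₁] ω ≤ 1 :=
    condExp_le_nonneg_const zero_le_one
      (ae_of_all _ fun ω => Set.indicator_apply_le' (fun _ => le_rfl) fun _ => zero_le_one)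
  filter_upwards [condExp_ae_eq_indicator_condExp hD (hSint.add hIint) hvanish,
    condExp_add hSint hIint m₁, hsub, condExp_condExp_of_le (μ := μ) (f := S) h₁₂ h₂,
    condExp_smul (μ := μ) δ (μ[S | m₂]) m₁, hmono, hIle, hXnn]
    with ω hind hadd hsubω htower hsmul hmonoω hIleω hXω
  by_cases hωD : ω ∈ D
  · have hωD' : δ ≤ μ[X - Y | m₁] ω := hωD
    simp only [Pi.add_apply, Pi.sub_apply, Pi.smul_apply, smul_eq_mul] at hadd hsubω hsmul hωD'
    rw [hadd, mul_add, ← htower, ← hsmul]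
    nlinarith [mul_le_mul_of_nonneg_left hIleω hδ]
  · rw [hind, Set.indicator_of_notMem hωD, mul_zero]
    exact hXω

theorem mul_condExp_sum_indicator_le_of_drift [IsFiniteMeasure μ] {ℱ : Filtration ℕ m0}
    {X : ℕ → Ω → ℝ} (hXad : StronglyAdapted ℱ X) (hXint : ∀ n, Integrable (X n) μ)
    (hXnn : ∀ n, 0 ≤ᵐ[μ] X n) {E : ℕ → Set Ω} (hE : Antitone E)
    (hEm : ∀ n, MeasurableSet (E n)) {δ : ℝ} (hδ : 0 ≤ δ)
    (hdrift : ∀ n, ∀ᵐ ω ∂μ, ω ∈ E n → δ ≤ μ[X n - X (n + 1) | ℱ n] ω) (j n : ℕ) :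
    ∀ᵐ ω ∂μ, δ * μ[∑ k ∈ range j, (E (n + k)).indicator 1 | ℱ n] ω ≤ X n ω := by
  induction j generalizing n with
  | zero =>
    filter_upwards [hXnn n] with ω hω
    simpa using hω
  | succ j ih =>
    have hsplit : ∑ k ∈ range (j + 1), (E (n + k)).indicator (1 : Ω → ℝ)
        = ∑ k ∈ range j, (E (n + 1 + k)).indicator 1 + (E n).indicator 1 := by
      simp only [sum_range_succ', add_zero, ← add_assoc, add_right_comm n 1]
    rw [hsplit]
    refine mul_condExp_add_indicator_le_of_drift (ℱ.mono n.le_succ) (ℱ.le (n + 1)) (hXad n)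
      (hXint n) (hXint (n + 1)) (hXnn n) (hEm n)
      (integrable_finsetSum' _ fun k _ => (integrable_const 1).indicator (hEm _))
      (fun ω hω => ?_) hδ (hdrift n) (ih (n + 1))
    rw [Finset.sum_apply]
    exact sum_eq_zero fun k _ => Set.indicator_of_notMem (fun h => hω (hE (by omega) h)) _

theorem condExp_natCast_ae_le_of_forall_sum_le [IsFiniteMeasure μ] {N : Ω → ℕ} (hN : Measurable N)
    (hNint : Integrable (fun ω => (N ω : ℝ)) μ) {g : Ω → ℝ}
    (hg : ∀ j, ∀ᵐ ω ∂μ, μ[∑ k ∈ range j, {ω | k < N ω}.indicator 1 | m] ω ≤ g ω) :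
    ∀ᵐ ω ∂μ, μ[fun ω => (N ω : ℝ) | m] ω ≤ g ω := by
  have hI : ∀ k, Integrable ({ω | k < N ω}.indicator (1 : Ω → ℝ)) μ := fun k =>
    (integrable_const 1).indicator (hN measurableSet_Ioi)
  filter_upwards [condExp_natCast_ae_eq_tsum hN hNint, ae_all_iff.2 hg,
    ae_all_iff.2 fun k => condExp_nonneg (f := {ω | k < N ω}.indicator (1 : Ω → ℝ)) (m := m)
      (ae_of_all μ fun ω => Set.indicator_nonneg (fun _ _ => zero_le_one) ω),
    ae_all_iff.2 fun j => condExp_finsetSum (s := range j) (fun k _ => hI k) m]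
    with ω htsum hle hnn hsum
  rw [htsum]
  refine Real.tsum_le_of_sum_range_le hnn fun j => ?_
  rw [← Finset.sum_apply, ← hsum j]
  exact hle j

end MeasureTheory

/-- **Additive drift theorem, upper bound** (He–Yao). If `(X t)` is a stochastic
process over a bounded state space `S ⊆ ℝ≥0`, adapted to its natural filtration,
`T ω = min {t | X t ω = 0}` has finite expectation, and the one-step drift
conditioned on the history is at least `δ > 0` on the event `{X t > 0, t < T}`,
then `E[T | X 0] ≤ X 0 / δ` almost surely. -/
theorem additive_drift_upper_bound
    {Ω : Type*} [MeasurableSpace Ω] (μ : Measure Ω) [IsProbabilityMeasure μ]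
    (X : ℕ → Ω → ℝ) (hX : ∀ t, StronglyMeasurable (X t))
    (B : ℝ) (hbounded : ∀ t ω, X t ω ∈ Set.Icc (0 : ℝ) B)
    (T : Ω → ℕ) (hT : ∀ ω, T ω = sInf {t | X t ω = 0})
    (hTint : Integrable (fun ω => (T ω : ℝ)) μ)
    (δ : ℝ) (hδ : 0 < δ)
    (hdrift : ∀ t, ∀ᵐ ω ∂μ, t < T ω → 0 < X t ω →
      δ ≤ (μ[X t - X (t + 1) | (MeasureTheory.Filtration.natural X hX) t]) ω) :
    ∀ᵐ ω ∂μ,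
      (μ[fun ω' => (T ω' : ℝ) | (MeasureTheory.Filtration.natural X hX) 0]) ω
        ≤ X 0 ω / δ := by
  have hXint : ∀ t, Integrable (X t) μ := fun t =>
    .of_mem_Icc 0 B (hX t).measurable.aemeasurable (ae_of_all _ (hbounded t))
  have hTm : Measurable T := by
    rw [show T = fun ω => sInf {t | X t ω = 0} from funext hT]
    exact measurable_nat_sInf_setOf fun t => (hX t).measurable (measurableSet_singleton 0)
  have hdrift' : ∀ t, ∀ᵐ ω ∂μ, ω ∈ {ω | t < T ω} →
      δ ≤ μ[X t - X (t + 1) | Filtration.natural X hX t] ω := by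
    intro t
    filter_upwards [hdrift t] with ω h ht
    exact h ht ((hbounded t ω).1.lt_of_ne' (Nat.notMem_of_lt_sInf (hT ω ▸ ht)))
  refine condExp_natCast_ae_le_of_forall_sum_le hTm hTint fun j => ?_
  filter_upwards [mul_condExp_sum_indicator_le_of_drift (Filtration.stronglyAdapted_natural hX)
    hXint (fun t => ae_of_all _ fun ω => (hbounded t ω).1) (E := fun k => {ω | k < T ω})
    (fun _ _ hab _ h => hab.trans_lt h)
    (fun k => hTm measurableSet_Ioi) hδ.le hdrift' j 0] with ω hω
  rw [le_div_iff₀ hδ, mul_comm]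
  simpa using hω
end

section
/- Let (X_t) be a process over S ⊆ {0} ∪ [x_min, x_max], x_min ≥ 0, h: [x_min,x_max] → ℝ+ integrable, and define g(x) := x_min/h(x_min) + ∫_{x_min}^x 1/h(y) dy for x ≥ x_min, g(0) := 0. If E[X_t − X_{t+1} | F_t; X_t ≥ x_min] ≥ h(X_t) and E[g(X_t) − g(X_{t+1}) | F_t; X_t ≥ x_min] ≥ α_u > 0, then E[T_0 | X_0] ≤ g(X_0)/α_u. -/
/-!
While `X` has not hit `0`, the rescaled process `g (X t)` is nonnegative, bounded, and loses at
least `αu` per step in conditional expectation. Hence `g (X t) + αu t`, stopped when `X` first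
hits `0`, is a supermartingale: if `τₙ` counts the steps before `n` at which `X` is still away
from `0`, then `αu ∫_s τₙ ≤ ∫_s g (X 0)` for every `F₀`-event `s`. Since `min T n ≤ τₙ`,
monotone convergence gives `∫_s T ≤ ∫_s g (X 0) / αu` for all such `s`, which characterizes the
bound on `E[T | F₀]`.
-/

open MeasureTheory Filter Set Finset Topology

section SetIntegral

variable {Ω : Type*} {m m0 : MeasurableSpace Ω} {μ : Measure Ω}

theorem condExp_ae_le_of_forall_setIntegral_le (hm : m ≤ m0) [SigmaFinite (μ.trim hm)]
    {f c : Ω → ℝ} (hf : Integrable f μ) (hc : StronglyMeasurable[m] c) (hci : Integrable c μ)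
    (hfc : ∀ s, MeasurableSet[m] s → ∫ ω in s, f ω ∂μ ≤ ∫ ω in s, c ω ∂μ) :
    μ[f|m] ≤ᵐ[μ] c := by
  refine ae_of_ae_trim hm <| ae_le_of_forall_setIntegral_le
    (integrable_condExp.trim hm stronglyMeasurable_condExp) (hci.trim hm hc) fun s hs _ => ?_
  rw [← setIntegral_trim hm stronglyMeasurable_condExp hs, ← setIntegral_trim hm hc hs,
    setIntegral_condExp hm hf hs]
  exact hfc s hs

theorem mul_measureReal_le_setIntegral_of_ae_le_condExp (hm : m ≤ m0) [SigmaFinite (μ.trim hm)]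
    [IsFiniteMeasure μ] {f : Ω → ℝ} {c : ℝ} {s : Set Ω} (hf : Integrable f μ)
    (hs : MeasurableSet[m] s) (hc : ∀ᵐ ω ∂μ, ω ∈ s → c ≤ μ[f|m] ω) :
    c * μ.real s ≤ ∫ ω in s, f ω ∂μ := by
  rw [← setIntegral_condExp hm hf hs, mul_comm, ← smul_eq_mul, ← setIntegral_const]
  exact setIntegral_mono_ae_restrict (integrable_const c) integrable_condExp.integrableOn
    ((ae_restrict_iff' (hm s hs)).2 hc)

theorem setIntegral_natCast_le_of_forall_min_le {T : Ω → ℕ}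
    (hT : Integrable (fun ω => (T ω : ℝ)) μ) {s : Set Ω} {b : ℝ}
    (hb : ∀ n : ℕ, ∫ ω in s, min (T ω : ℝ) n ∂μ ≤ b) : ∫ ω in s, (T ω : ℝ) ∂μ ≤ b := by
  refine le_of_tendsto' (integral_tendsto_of_tendsto_of_monotone
    (f := fun (n : ℕ) ω => min (T ω : ℝ) n) (fun n => ?_) hT.integrableOn
    (ae_of_all _ fun ω n m hnm => min_le_min_left _ (Nat.cast_le.2 hnm))
    (ae_of_all _ fun ω => tendsto_atTop_of_eventually_const (i₀ := T ω)
      fun n hn => min_eq_left (Nat.cast_le.2 hn))) hb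
  refine hT.integrableOn.mono' (hT.1.restrict.inf aestronglyMeasurable_const)
    (ae_of_all _ fun ω => ?_)
  rw [Real.norm_of_nonneg (by positivity)]
  exact min_le_left _ _

end SetIntegral

section AdditiveDrift

open scoped Classical

variable {Ω : Type*} {m0 : MeasurableSpace Ω} {μ : Measure Ω} [IsFiniteMeasure μ]
  {𝓕 : Filtration ℕ m0} {Y : ℕ → Ω → ℝ} {A : ℕ → Set Ω} {α : ℝ}

theorem add_sum_indicator_increment_eq (hA : Antitone A) (ω : Ω) (n : ℕ) :
    Y 0 ω + ∑ k ∈ range n, (A k).indicator (fun ω => Y (k + 1) ω - Y k ω + α) ω =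
      Y (Nat.count (fun k => ω ∈ A k) n) ω + α * Nat.count (fun k => ω ∈ A k) n := by
  induction n with
  | zero => simp
  | succ n ih =>
    rw [sum_range_succ, ← add_assoc, ih, Nat.count_succ]
    by_cases hω : ω ∈ A n
    · have hcount : Nat.count (fun k => ω ∈ A k) n = n :=
        Nat.count_iff_forall.2 fun k hk => hA hk.le hω
      simp only [hω, indicator_of_mem, if_true, hcount]
      push_cast
      ring
    · simp [hω]

theorem natCast_count_eq_sum_indicator (ω : Ω) (n : ℕ) :
    (Nat.count (fun k => ω ∈ A k) n : ℝ) = ∑ k ∈ range n, (A k).indicator 1 ω := by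
  simp only [Nat.count_eq_card_filter_range, natCast_card_filter, indicator_apply, Pi.one_apply]

theorem setIntegral_indicator_increment_nonpos {n : ℕ} (hYi : ∀ k, Integrable (Y k) μ)
    (hAm : MeasurableSet[𝓕 n] (A n))
    (hdrift : ∀ᵐ ω ∂μ, ω ∈ A n → α ≤ μ[fun ω => Y n ω - Y (n + 1) ω | 𝓕 n] ω)
    {s : Set Ω} (hs : MeasurableSet[𝓕 n] s) :
    ∫ ω in s, (A n).indicator (fun ω => Y (n + 1) ω - Y n ω + α) ω ∂μ ≤ 0 := by
  have hdiff : Integrable (fun ω => Y n ω - Y (n + 1) ω) μ := (hYi n).sub (hYi (n + 1))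
  have hdrift' : α * μ.real (s ∩ A n) ≤ ∫ ω in s ∩ A n, (Y n ω - Y (n + 1) ω) ∂μ :=
    mul_measureReal_le_setIntegral_of_ae_le_condExp (𝓕.le n) hdiff (hs.inter hAm)
      (by filter_upwards [hdrift] with ω h hω using h hω.2)
  calc ∫ ω in s, (A n).indicator (fun ω => Y (n + 1) ω - Y n ω + α) ω ∂μ
      = ∫ ω in s ∩ A n, (α - (Y n ω - Y (n + 1) ω)) ∂μ := by
        rw [setIntegral_indicator (𝓕.le n _ hAm)]
        congr 1 with ω
        ring
    _ = α * μ.real (s ∩ A n) - ∫ ω in s ∩ A n, (Y n ω - Y (n + 1) ω) ∂μ := by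
        rw [integral_sub (integrable_const α) hdiff.integrableOn, setIntegral_const, smul_eq_mul,
          mul_comm]
    _ ≤ 0 := sub_nonpos.2 hdrift'

theorem integrable_natCast_count (hAm : ∀ n, MeasurableSet (A n)) (n : ℕ) :
    Integrable (fun ω => (Nat.count (fun k => ω ∈ A k) n : ℝ)) μ := by
  simp_rw [natCast_count_eq_sum_indicator]
  exact integrable_finsetSum _ fun k _ => (integrable_const 1).indicator (hAm k)

theorem mul_setIntegral_count_le_of_drift (hYi : ∀ n, Integrable (Y n) μ)
    (hYnn : ∀ n ω, 0 ≤ Y n ω) (hA : Antitone A) (hAm : ∀ n, MeasurableSet[𝓕 n] (A n))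
    (hdrift : ∀ n, ∀ᵐ ω ∂μ, ω ∈ A n → α ≤ μ[fun ω => Y n ω - Y (n + 1) ω | 𝓕 n] ω)
    (n : ℕ) {s : Set Ω} (hs : MeasurableSet[𝓕 0] s) :
    α * ∫ ω in s, (Nat.count (fun k => ω ∈ A k) n : ℝ) ∂μ ≤ ∫ ω in s, Y 0 ω ∂μ := by
  set D : ℕ → Ω → ℝ := fun k => (A k).indicator (fun ω => Y (k + 1) ω - Y k ω + α)
  have hD : ∀ k, Integrable (D k) μ := fun k =>
    (((hYi (k + 1)).sub (hYi k)).add (integrable_const α)).indicator (𝓕.le k _ (hAm k))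
  have hDi : Integrable (fun ω => ∑ k ∈ range n, D k ω) μ :=
    integrable_finsetSum _ fun k _ => hD k
  calc α * ∫ ω in s, (Nat.count (fun k => ω ∈ A k) n : ℝ) ∂μ
      = ∫ ω in s, α * Nat.count (fun k => ω ∈ A k) n ∂μ := (integral_const_mul _ _).symm
    _ ≤ ∫ ω in s, (Y 0 ω + ∑ k ∈ range n, D k ω) ∂μ := by
        refine integral_mono ((integrable_natCast_count (fun k => 𝓕.le k _ (hAm k)) n).const_mul
          α).integrableOn ((hYi 0).add hDi).integrableOn fun ω => ?_
        rw [add_sum_indicator_increment_eq hA]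
        linarith [hYnn (Nat.count (fun k => ω ∈ A k) n) ω]
    _ = ∫ ω in s, Y 0 ω ∂μ + ∑ k ∈ range n, ∫ ω in s, D k ω ∂μ := by
        rw [integral_add (hYi 0).integrableOn hDi.integrableOn,
          integral_finsetSum _ fun k _ => (hD k).integrableOn]
    _ ≤ ∫ ω in s, Y 0 ω ∂μ := add_le_of_nonpos_right <| sum_nonpos fun k _ =>
        setIntegral_indicator_increment_nonpos hYi (hAm k) (hdrift k)
          (𝓕.mono (Nat.zero_le k) _ hs)

theorem condExp_natCast_ae_le_div_of_drift (hYa : StronglyAdapted 𝓕 Y)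
    (hYi : ∀ n, Integrable (Y n) μ) (hYnn : ∀ n ω, 0 ≤ Y n ω) (hA : Antitone A)
    (hAm : ∀ n, MeasurableSet[𝓕 n] (A n))
    (hdrift : ∀ n, ∀ᵐ ω ∂μ, ω ∈ A n → α ≤ μ[fun ω => Y n ω - Y (n + 1) ω | 𝓕 n] ω)
    (hα : 0 < α) {T : Ω → ℕ} (hT : ∀ ω k, k < T ω → ω ∈ A k) :
    μ[fun ω => (T ω : ℝ) | 𝓕 0] ≤ᵐ[μ] fun ω => Y 0 ω / α := by
  by_cases hTi : Integrable (fun ω => (T ω : ℝ)) μ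
  swap
  · rw [condExp_of_not_integrable hTi]
    exact ae_of_all _ fun ω => div_nonneg (hYnn 0 ω) hα.le
  refine condExp_ae_le_of_forall_setIntegral_le (𝓕.le 0) hTi
    ((hYa 0).measurable.div_const α).stronglyMeasurable ((hYi 0).div_const α)
    fun s hs => setIntegral_natCast_le_of_forall_min_le hTi fun n => ?_
  have hmin : ∀ ω, min (T ω : ℝ) n ≤ Nat.count (fun k => ω ∈ A k) n := fun ω => by
    have hcount : Nat.count (fun k => ω ∈ A k) (min (T ω) n) = min (T ω) n :=
      Nat.count_iff_forall.2 fun k hk => hT ω k (lt_min_iff.1 hk).1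
    exact_mod_cast hcount ▸ Nat.count_monotone _ (min_le_right _ n)
  calc ∫ ω in s, min (T ω : ℝ) n ∂μ
      ≤ ∫ ω in s, (Nat.count (fun k => ω ∈ A k) n : ℝ) ∂μ :=
        integral_mono_of_nonneg (ae_of_all _ fun ω => by positivity)
          (integrable_natCast_count (fun k => 𝓕.le k _ (hAm k)) n).integrableOn (ae_of_all _ hmin)
    _ ≤ (∫ ω in s, Y 0 ω ∂μ) / α :=
        (le_div_iff₀' hα).2 (mul_setIntegral_count_le_of_drift hYi hYnn hA hAm hdrift n hs)
    _ = ∫ ω in s, Y 0 ω / α ∂μ := (integral_div _ _).symm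

end AdditiveDrift

theorem ContinuousOn.measurable_indicator {α γ : Type*} [TopologicalSpace α] [MeasurableSpace α]
    [OpensMeasurableSpace α] [TopologicalSpace γ] [MeasurableSpace γ] [BorelSpace γ] [Zero γ]
    {F : α → γ} {s : Set α} (hF : ContinuousOn F s) (hs : MeasurableSet s) :
    Measurable (s.indicator F) := by
  classical
  rw [← piecewise_eq_indicator]
  exact hF.measurable_piecewise continuousOn_const hs

section Rescaling

variable {a b c : ℝ} {f g : ℝ → ℝ}

theorem continuousOn_intervalIntegral_of_integrableOn_Icc (hf : IntegrableOn f (Icc a b)) :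
    ContinuousOn (fun x => ∫ y in a..x, f y) (Icc a b) :=
  (intervalIntegral.continuousOn_primitive hf).congr fun _ hx =>
    intervalIntegral.integral_of_le hx.1

theorem eqOn_indicator_of_eq_add_intervalIntegral (hg0 : g 0 = 0)
    (hg : ∀ x, a ≤ x → g x = c + ∫ y in a..x, f y) :
    EqOn g ((Icc a b).indicator fun x => c + ∫ y in a..x, f y) (insert 0 (Icc a b)) := by
  intro x hx
  by_cases hxab : x ∈ Icc a b
  · rw [indicator_of_mem hxab, hg x hxab.1]
  · rw [indicator_of_notMem hxab, (mem_insert_iff.1 hx).resolve_right hxab, hg0]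

theorem bddAbove_image_of_eq_add_intervalIntegral (hf : IntegrableOn f (Icc a b))
    (hg : ∀ x, a ≤ x → g x = c + ∫ y in a..x, f y) : BddAbove (g '' insert 0 (Icc a b)) := by
  rw [image_insert_eq, EqOn.image_eq fun x hx => hg x hx.1]
  exact (isCompact_Icc.bddAbove_image
    (continuousOn_const.add (continuousOn_intervalIntegral_of_integrableOn_Icc hf))).insert _

theorem nonneg_of_eq_div_add_intervalIntegral_inv {h : ℝ → ℝ} (ha : 0 ≤ a)
    (hpos : ∀ x ∈ Icc a b, 0 < h x) (hg0 : g 0 = 0)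
    (hg : ∀ x, a ≤ x → g x = a / h a + ∫ y in a..x, (h y)⁻¹) :
    ∀ x ∈ insert 0 (Icc a b), 0 ≤ g x := by
  rintro x (rfl | hx)
  · exact hg0.ge
  · rw [hg x hx.1]
    exact add_nonneg (div_nonneg ha (hpos a ⟨le_rfl, hx.1.trans hx.2⟩).le)
      (intervalIntegral.integral_nonneg hx.1 fun y hy =>
        inv_nonneg.2 (hpos y ⟨hy.1, hy.2.trans hx.2⟩).le)

end Rescaling

section NaturalFiltration

variable {Ω : Type*} {m0 : MeasurableSpace Ω} {X : ℕ → Ω → ℝ}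
  (hX : ∀ t, StronglyMeasurable (X t))

theorem stronglyAdapted_natural_comp_of_eqOn {S : Set ℝ} {g G : ℝ → ℝ}
    (hXS : ∀ t ω, X t ω ∈ S) (hG : Measurable G) (hgG : EqOn g G S) :
    StronglyAdapted (Filtration.natural X hX) fun t ω => g (X t ω) := fun t => by
  have hcomp : (fun ω => g (X t ω)) = G ∘ X t := funext fun ω => hgG (hXS t ω)
  beta_reduce
  rw [hcomp]
  exact (hG.comp (Filtration.stronglyAdapted_natural hX t).measurable).stronglyMeasurable

theorem measurableSet_natural_forall_le_ne_zero (k : ℕ) :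
    MeasurableSet[Filtration.natural X hX k] {ω | ∀ j ≤ k, X j ω ≠ 0} := by
  simp only [ofPred_forall]
  exact MeasurableSet.iInter fun j => MeasurableSet.iInter fun hj =>
    ((Filtration.stronglyAdapted_natural hX j).mono (Filtration.mono _ hj)).measurable
      (measurableSet_singleton 0).compl

end NaturalFiltration

theorem general_drift_upper_bound_general
    {Ω : Type*} [MeasurableSpace Ω] (μ : Measure Ω) [IsProbabilityMeasure μ]
    (X : ℕ → Ω → ℝ) (hX : ∀ t, StronglyMeasurable (X t))
    (xmin xmax : ℝ) (hxmin : 0 ≤ xmin)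
    (hstate : ∀ t ω, X t ω = 0 ∨ X t ω ∈ Set.Icc xmin xmax)
    (h : ℝ → ℝ) (hpos : ∀ x ∈ Set.Icc xmin xmax, 0 < h x)
    (hint : IntegrableOn (fun y => (h y)⁻¹) (Set.Icc xmin xmax))
    (g : ℝ → ℝ) (hg0 : g 0 = 0)
    (hg : ∀ x, xmin ≤ x → g x = xmin / h xmin + ∫ y in xmin..x, (h y)⁻¹)
    (T : Ω → ℕ) (hT : ∀ ω, T ω = sInf {t | X t ω = 0})
    (αu : ℝ) (hαu : 0 < αu)
    (hgdrift : ∀ t, ∀ᵐ ω ∂μ, xmin ≤ X t ω →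
      αu ≤ (μ[(fun ω' => g (X t ω') - g (X (t + 1) ω')) |
        (MeasureTheory.Filtration.natural X hX) t]) ω) :
    ∀ᵐ ω ∂μ,
      (μ[fun ω' => (T ω' : ℝ) | (MeasureTheory.Filtration.natural X hX) 0]) ω
        ≤ g (X 0 ω) / αu := by
  have hXS : ∀ t ω, X t ω ∈ insert 0 (Icc xmin xmax) := hstate
  have hgnn : ∀ t ω, 0 ≤ g (X t ω) := fun t ω =>
    nonneg_of_eq_div_add_intervalIntegral_inv hxmin hpos hg0 hg _ (hXS t ω)
  obtain ⟨C, hC⟩ := bddAbove_image_of_eq_add_intervalIntegral hint hg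
  have hadapted := stronglyAdapted_natural_comp_of_eqOn hX hXS
    ((continuousOn_const.add (continuousOn_intervalIntegral_of_integrableOn_Icc hint)
      ).measurable_indicator measurableSet_Icc) (eqOn_indicator_of_eq_add_intervalIntegral hg0 hg)
  have hint_g : ∀ t, Integrable (fun ω => g (X t ω)) μ := fun t =>
    Integrable.of_bound ((hadapted t).mono (Filtration.le _ t)).aestronglyMeasurable C
      (ae_of_all _ fun ω => (Real.norm_of_nonneg (hgnn t ω)).trans_le
        (hC (mem_image_of_mem g (hXS t ω))))
  -- `{ω | k < T ω}` is not `F k`-measurable, since `T ω = sInf ∅ = 0` when `X` never hits `0`.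
  refine condExp_natCast_ae_le_div_of_drift (A := fun k => {ω | ∀ j ≤ k, X j ω ≠ 0}) hadapted
    hint_g hgnn (fun k l hkl ω hω j hj => hω j (hj.trans hkl))
    (measurableSet_natural_forall_le_ne_zero hX) (fun t => ?_) hαu
    fun ω k hk j hj hX0 => Nat.notMem_of_lt_sInf (hj.trans_lt (hT ω ▸ hk)) hX0
  filter_upwards [hgdrift t] with ω hω hA
  exact hω ((hstate t ω).resolve_left (hA t le_rfl)).1

/-- **General drift theorem, statement (i)** (upper bound on the expected hitting
time). `(X t)` is a process over `S ⊆ {0} ∪ [xmin, xmax]`, `h` a positive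
integrable function on `[xmin, xmax]`,
`g x = xmin / h xmin + ∫_{xmin}^x 1/h(y) dy` for `x ≥ xmin` and `g 0 = 0`.
If `E[X t − X (t+1) | F_t; X t ≥ xmin] ≥ h (X t)` and
`E[g (X t) − g (X (t+1)) | F_t; X t ≥ xmin] ≥ α_u > 0`, then
`E[T₀ | X 0] ≤ g (X 0) / α_u` a.s., where `T₀ = min {t | X t = 0}`. -/
theorem general_drift_upper_bound
    {Ω : Type*} [MeasurableSpace Ω] (μ : Measure Ω) [IsProbabilityMeasure μ]
    (X : ℕ → Ω → ℝ) (hX : ∀ t, StronglyMeasurable (X t))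
    (xmin xmax : ℝ) (hxmin : 0 ≤ xmin)
    (hstate : ∀ t ω, X t ω = 0 ∨ X t ω ∈ Set.Icc xmin xmax)
    (h : ℝ → ℝ) (hpos : ∀ x ∈ Set.Icc xmin xmax, 0 < h x)
    (hint : IntegrableOn (fun y => (h y)⁻¹) (Set.Icc xmin xmax))
    (g : ℝ → ℝ) (hg0 : g 0 = 0)
    (hg : ∀ x, xmin ≤ x → g x = xmin / h xmin + ∫ y in xmin..x, (h y)⁻¹)
    (T : Ω → ℕ) (hT : ∀ ω, T ω = sInf {t | X t ω = 0})
    (αu : ℝ) (hαu : 0 < αu)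
    (hdrift : ∀ t, ∀ᵐ ω ∂μ, xmin ≤ X t ω →
      h (X t ω) ≤ (μ[X t - X (t + 1) | (MeasureTheory.Filtration.natural X hX) t]) ω)
    (hgdrift : ∀ t, ∀ᵐ ω ∂μ, xmin ≤ X t ω →
      αu ≤ (μ[(fun ω' => g (X t ω') - g (X (t + 1) ω')) |
        (MeasureTheory.Filtration.natural X hX) t]) ω) :
    ∀ᵐ ω ∂μ,
      (μ[fun ω' => (T ω' : ℝ) | (MeasureTheory.Filtration.natural X hX) 0]) ω
        ≤ g (X 0 ω) / αu :=
  general_drift_upper_bound_general μ X hX xmin xmax hxmin hstate h hpos hint g hg0 hg T hT αu hαu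
    hgdrift
end

section
/- Let h be a real-valued differentiable function on [x_min, x_max] with h > 0, λ > 0, and define g(x) := ∫_{x_min}^x 1/h(y) dy. If h'(x) ≥ λ for all x, then x ↦ e^{λ g(x)} is concave; if h'(x) ≤ λ, then e^{λ g(x)} is convex; if h'(x) ≥ −λ, then e^{−λ g(x)} is convex; if h'(x) ≤ −λ, then e^{−λ g(x)} is concave. -/
/-!
Writing `φ = exp (c g)` with `g' = 1 / h`, one has `φ' = c φ / h` and
`φ'' = c (c - h') φ / h²`, so the sign of `φ''` is that of `c (c - h')`.
Taking `c = ±λ`, each of the four hypotheses on `h'` fixes this sign.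
-/

open MeasureTheory Set

section Primitive

variable {E : Type*} [NormedAddCommGroup E] [NormedSpace ℝ E] {f : ℝ → E} {a b : ℝ}

theorem continuousOn_primitive_of_continuousOn_Icc (hf : ContinuousOn f (Icc a b)) :
    ContinuousOn (fun x => ∫ y in a..x, f y) (Icc a b) := by
  rcases le_or_gt a b with hab | hba
  · have hf' : IntegrableOn f (uIcc a b) := by
      simpa only [uIcc_of_le hab] using hf.integrableOn_Icc
    simpa only [uIcc_of_le hab] using intervalIntegral.continuousOn_primitive_interval hf'
  · simp [Icc_eq_empty_of_lt hba]

theorem hasDerivAt_primitive_of_continuousOn_Icc [CompleteSpace E]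
    (hf : ContinuousOn f (Icc a b)) {x : ℝ} (hx : x ∈ Ioo a b) :
    HasDerivAt (fun x => ∫ y in a..x, f y) (f x) x := by
  have hf' : ContinuousOn f (Ioo a b) := hf.mono Ioo_subset_Icc_self
  refine intervalIntegral.integral_hasDerivAt_right ?_
    (hf'.stronglyMeasurableAtFilter isOpen_Ioo x hx) (hf'.continuousAt (isOpen_Ioo.mem_nhds hx))
  exact (hf.mono (Icc_subset_Icc_right hx.2.le)).intervalIntegrable_of_Icc hx.1.le

end Primitive

section ExpOfPrimitiveInv

variable {h h' g : ℝ → ℝ} {a b c x : ℝ}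

theorem hasDerivAt_exp_mul_of_hasDerivAt_inv (hg : HasDerivAt g (h x)⁻¹ x) :
    HasDerivAt (fun x => Real.exp (c * g x)) (c * (h x)⁻¹ * Real.exp (c * g x)) x := by
  simpa only [mul_comm] using (hg.const_mul c).exp

theorem hasDerivAt_mul_inv_mul_exp_mul_of_hasDerivAt_inv (hg : HasDerivAt g (h x)⁻¹ x)
    (hh : HasDerivAt h (h' x) x) (h0 : h x ≠ 0) :
    HasDerivAt (fun x => c * (h x)⁻¹ * Real.exp (c * g x))
      (c * (c - h' x) * ((h x)⁻¹ ^ 2 * Real.exp (c * g x))) x := by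
  have h₁ : HasDerivAt (fun x => c * (h x)⁻¹) (c * (-h' x / h x ^ 2)) x :=
    (hh.inv h0).const_mul c
  refine (h₁.mul (hasDerivAt_exp_mul_of_hasDerivAt_inv hg)).congr_deriv ?_
  field_simp
  ring

variable (hg : ContinuousOn g (Icc a b)) (hg' : ∀ x ∈ Ioo a b, HasDerivAt g (h x)⁻¹ x)
  (hh : ∀ x ∈ Ioo a b, HasDerivAt h (h' x) x) (h0 : ∀ x ∈ Ioo a b, h x ≠ 0)
include hg hg' hh h0

theorem convexOn_exp_mul_of_hasDerivAt_inv (hc : ∀ x ∈ Ioo a b, 0 ≤ c * (c - h' x)) :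
    ConvexOn ℝ (Icc a b) (fun x => Real.exp (c * g x)) := by
  refine convexOn_of_hasDerivWithinAt2_nonneg (convex_Icc a b) (continuousOn_const.mul hg).rexp
    (f' := fun x => c * (h x)⁻¹ * Real.exp (c * g x))
    (f'' := fun x => c * (c - h' x) * ((h x)⁻¹ ^ 2 * Real.exp (c * g x))) ?_ ?_ ?_ <;>
    rw [interior_Icc] <;> intro x hx
  · exact (hasDerivAt_exp_mul_of_hasDerivAt_inv (hg' x hx)).hasDerivWithinAt
  · exact (hasDerivAt_mul_inv_mul_exp_mul_of_hasDerivAt_inv (hg' x hx) (hh x hx)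
      (h0 x hx)).hasDerivWithinAt
  · exact mul_nonneg (hc x hx) (by positivity)

theorem concaveOn_exp_mul_of_hasDerivAt_inv (hc : ∀ x ∈ Ioo a b, c * (c - h' x) ≤ 0) :
    ConcaveOn ℝ (Icc a b) (fun x => Real.exp (c * g x)) := by
  refine concaveOn_of_hasDerivWithinAt2_nonpos (convex_Icc a b) (continuousOn_const.mul hg).rexp
    (f' := fun x => c * (h x)⁻¹ * Real.exp (c * g x))
    (f'' := fun x => c * (c - h' x) * ((h x)⁻¹ ^ 2 * Real.exp (c * g x))) ?_ ?_ ?_ <;>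
    rw [interior_Icc] <;> intro x hx
  · exact (hasDerivAt_exp_mul_of_hasDerivAt_inv (hg' x hx)).hasDerivWithinAt
  · exact (hasDerivAt_mul_inv_mul_exp_mul_of_hasDerivAt_inv (hg' x hx) (hh x hx)
      (h0 x hx)).hasDerivWithinAt
  · exact mul_nonpos_of_nonpos_of_nonneg (hc x hx) (by positivity)

end ExpOfPrimitiveInv

theorem exp_of_integral_inv_convexity_general
    (xmin xmax : ℝ)
    (h h' : ℝ → ℝ)
    (hpos : ∀ x ∈ Set.Icc xmin xmax, 0 < h x)
    (hderiv : ∀ x ∈ Set.Icc xmin xmax, HasDerivAt h (h' x) x)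
    (lam : ℝ) (hlam : 0 < lam)
    (g : ℝ → ℝ) (hg : ∀ x, g x = ∫ y in xmin..x, (h y)⁻¹) :
    ((∀ x ∈ Set.Icc xmin xmax, lam ≤ h' x) →
      ConcaveOn ℝ (Set.Icc xmin xmax) (fun x => Real.exp (lam * g x))) ∧
    ((∀ x ∈ Set.Icc xmin xmax, h' x ≤ lam) →
      ConvexOn ℝ (Set.Icc xmin xmax) (fun x => Real.exp (lam * g x))) ∧
    ((∀ x ∈ Set.Icc xmin xmax, -lam ≤ h' x) →
      ConvexOn ℝ (Set.Icc xmin xmax) (fun x => Real.exp (-lam * g x))) ∧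
    ((∀ x ∈ Set.Icc xmin xmax, h' x ≤ -lam) →
      ConcaveOn ℝ (Set.Icc xmin xmax) (fun x => Real.exp (-lam * g x))) := by
  have hinv : ContinuousOn (fun y => (h y)⁻¹) (Icc xmin xmax) :=
    ContinuousOn.inv₀ (fun x hx => (hderiv x hx).continuousAt.continuousWithinAt)
      fun x hx => (hpos x hx).ne'
  obtain rfl : g = fun x => ∫ y in xmin..x, (h y)⁻¹ := funext hg
  have hg₀ := continuousOn_primitive_of_continuousOn_Icc hinv
  have hg' := fun x (hx : x ∈ Ioo xmin xmax) => hasDerivAt_primitive_of_continuousOn_Icc hinv hx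
  have hh := fun x (hx : x ∈ Ioo xmin xmax) => hderiv x (Ioo_subset_Icc_self hx)
  have h0 := fun x (hx : x ∈ Ioo xmin xmax) => (hpos x (Ioo_subset_Icc_self hx)).ne'
  refine ⟨fun hbound => concaveOn_exp_mul_of_hasDerivAt_inv hg₀ hg' hh h0 fun x hx => ?_,
    fun hbound => convexOn_exp_mul_of_hasDerivAt_inv hg₀ hg' hh h0 fun x hx => ?_,
    fun hbound => convexOn_exp_mul_of_hasDerivAt_inv hg₀ hg' hh h0 fun x hx => ?_,
    fun hbound => concaveOn_exp_mul_of_hasDerivAt_inv hg₀ hg' hh h0 fun x hx => ?_⟩ <;>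
    have := hbound x (Ioo_subset_Icc_self hx)
  · exact mul_nonpos_of_nonneg_of_nonpos hlam.le (by linarith)
  · exact mul_nonneg hlam.le (by linarith)
  · exact mul_nonneg_of_nonpos_of_nonpos (by linarith) (by linarith)
  · exact mul_nonpos_of_nonpos_of_nonneg (by linarith) (by linarith)

/-- Convexity/concavity of exponential transforms of `g(x) = ∫_{xmin}^x 1/h(y) dy`
for a positive differentiable `h` on `[xmin, xmax]` and `λ > 0`:
if `h' ≥ λ` then `e^{λ g}` is concave; if `h' ≤ λ` then `e^{λ g}` is convex;
if `h' ≥ −λ` then `e^{−λ g}` is convex; if `h' ≤ −λ` then `e^{−λ g}` is concave. -/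
theorem exp_of_integral_inv_convexity
    (xmin xmax : ℝ) (hle : xmin ≤ xmax)
    (h h' : ℝ → ℝ)
    (hpos : ∀ x ∈ Set.Icc xmin xmax, 0 < h x)
    (hderiv : ∀ x ∈ Set.Icc xmin xmax, HasDerivAt h (h' x) x)
    (lam : ℝ) (hlam : 0 < lam)
    (g : ℝ → ℝ) (hg : ∀ x, g x = ∫ y in xmin..x, (h y)⁻¹) :
    ((∀ x ∈ Set.Icc xmin xmax, lam ≤ h' x) →
      ConcaveOn ℝ (Set.Icc xmin xmax) (fun x => Real.exp (lam * g x))) ∧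
    ((∀ x ∈ Set.Icc xmin xmax, h' x ≤ lam) →
      ConvexOn ℝ (Set.Icc xmin xmax) (fun x => Real.exp (lam * g x))) ∧
    ((∀ x ∈ Set.Icc xmin xmax, -lam ≤ h' x) →
      ConvexOn ℝ (Set.Icc xmin xmax) (fun x => Real.exp (-lam * g x))) ∧
    ((∀ x ∈ Set.Icc xmin xmax, h' x ≤ -lam) →
      ConcaveOn ℝ (Set.Icc xmin xmax) (fun x => Real.exp (-lam * g x))) :=
  exp_of_integral_inv_convexity_general xmin xmax h h' hpos hderiv lam hlam g hg
end

section
/- If h: [x_min, x_max] → ℝ+ is monotone increasing and g(x) := x_min/h(x_min) + ∫_{x_min}^x 1/h(y) dy, then g is concave on [x_min, x_max], and for any random variable X_{t+1} with E[X_{t+1} | F_t] ≤ X_t − h(X_t), one has E[g(X_t) − g(X_{t+1}) | F_t] ≥ 1. -/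
/-!
With `f = 1/h` antitone, `g x - g y = ∫_y^x f` lies between `(x - y) f x` and `(x - y) f y`.
Hence `g` is concave on `[xmin, xmax]`, and on the whole state space `{0} ∪ [xmin, xmax]` it has
the supergradient `f x` at `x` (at `0` the slope `f xmin`, because `g 0 = 0`):
`(x - y) f x ≤ g x - g y`. Putting `x = X t`, `y = X (t + 1)`, taking conditional expectations
and pulling out the `F_t`-measurable factor `f (X t)` gives
`E[g (X t) - g (X (t + 1)) | F_t] ≥ (X t - E[X (t + 1) | F_t]) / h (X t) ≥ 1`.
-/

open MeasureTheory Set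

section AntitoneOn

variable {f : ℝ → ℝ} {a b : ℝ}

theorem AntitoneOn.intervalIntegrable_of_mem_Icc (hf : AntitoneOn f (Icc a b)) {x y : ℝ}
    (hx : x ∈ Icc a b) (hy : y ∈ Icc a b) : IntervalIntegrable f volume x y :=
  (hf.mono (uIcc_subset_Icc hx hy)).intervalIntegrable

theorem AntitoneOn.mul_le_intervalIntegral (hf : AntitoneOn f (Icc a b)) (hab : a ≤ b) :
    (b - a) * f b ≤ ∫ x in a..b, f x := by
  simpa using intervalIntegral.integral_mono_on hab intervalIntegrable_const
    (hf.intervalIntegrable_of_mem_Icc (left_mem_Icc.2 hab) (right_mem_Icc.2 hab))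
    fun x hx => hf hx (right_mem_Icc.2 hab) hx.2

theorem AntitoneOn.intervalIntegral_le_mul (hf : AntitoneOn f (Icc a b)) (hab : a ≤ b) :
    ∫ x in a..b, f x ≤ (b - a) * f a := by
  simpa using intervalIntegral.integral_mono_on hab
    (hf.intervalIntegrable_of_mem_Icc (left_mem_Icc.2 hab) (right_mem_Icc.2 hab))
    intervalIntegrable_const fun x hx => hf (left_mem_Icc.2 hab) hx hx.1

theorem AntitoneOn.antitone_comp_projIcc (hf : AntitoneOn f (Icc a b)) (hab : a ≤ b) :
    Antitone fun x => f (projIcc a b hab x) := fun x y hxy =>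
  hf (projIcc a b hab x).2 (projIcc a b hab y).2 (monotone_projIcc hab hxy)

theorem AntitoneOn.norm_comp_projIcc_le (hf : AntitoneOn f (Icc a b))
    (hf0 : ∀ x ∈ Icc a b, 0 ≤ f x) (hab : a ≤ b) (x : ℝ) : ‖f (projIcc a b hab x)‖ ≤ f a := by
  have hx := (projIcc a b hab x).2
  rw [Real.norm_of_nonneg (hf0 _ hx)]
  exact hf (left_mem_Icc.2 hab) hx hx.1

end AntitoneOn

theorem isLeast_insert_zero_Icc {a b : ℝ} (ha : 0 ≤ a) : IsLeast (insert 0 (Icc a b)) 0 :=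
  ⟨mem_insert 0 _, by rintro x (rfl | hx); exacts [le_rfl, ha.trans hx.1]⟩

theorem isGreatest_insert_zero_Icc {a b : ℝ} (ha : 0 ≤ a) (hab : a ≤ b) :
    IsGreatest (insert 0 (Icc a b)) b :=
  ⟨mem_insert_of_mem 0 (right_mem_Icc.2 hab), by rintro x (rfl | hx); exacts [ha.trans hab, hx.2]⟩

theorem MonotoneOn.integrable_comp {Ω : Type*} [MeasurableSpace Ω] {μ : Measure Ω}
    [IsFiniteMeasure μ] {g : ℝ → ℝ} {s : Set ℝ} {a b : ℝ} (hg : MonotoneOn g s)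
    (ha : IsLeast s a) (hb : IsGreatest s b) {X : Ω → ℝ} (hX : Measurable X)
    (hXs : ∀ ω, X ω ∈ s) : Integrable (fun ω => g (X ω)) μ := by
  obtain ⟨G, hG, hgG⟩ :=
    hg.exists_monotone_extension (hg.map_isLeast ha).bddBelow (hg.map_isGreatest hb).bddAbove
  have hgX : (fun ω => g (X ω)) = G ∘ X := funext fun ω => hgG (hXs ω)
  rw [hgX]
  exact .of_mem_Icc (G a) (G b) (hG.measurable.comp hX).aemeasurable
    (ae_of_all _ fun ω => ⟨hG (ha.2 (hXs ω)), hG (hb.2 (hXs ω))⟩)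

theorem MeasureTheory.sub_condExp_mul_le_condExp {Ω : Type*} {m m₀ : MeasurableSpace Ω}
    {μ : Measure Ω} [IsFiniteMeasure μ] (hm : m ≤ m₀) {φ Y Z F : Ω → ℝ} {C : ℝ}
    (hφ : StronglyMeasurable[m] φ) (hφC : ∀ ω, ‖φ ω‖ ≤ C) (hY : StronglyMeasurable[m] Y)
    (hYi : Integrable Y μ) (hZi : Integrable Z μ) (hFi : Integrable F μ)
    (hle : ∀ ω, (Y ω - Z ω) * φ ω ≤ F ω) :
    ∀ᵐ ω ∂μ, (Y ω - μ[Z | m] ω) * φ ω ≤ μ[F | m] ω := by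
  have hYZ : Integrable (Y - Z) μ := hYi.sub hZi
  have hprod : Integrable ((Y - Z) * φ) μ :=
    hYZ.mul_bdd (hφ.mono hm).aestronglyMeasurable (ae_of_all _ hφC)
  have hYm : μ[Y | m] = Y := condExp_of_stronglyMeasurable hm hY hYi
  filter_upwards [condExp_mul_of_stronglyMeasurable_right hφ hprod hYZ, condExp_sub hYi hZi m,
    condExp_mono hprod hFi (ae_of_all _ hle)] with ω hpull hsub hmono
  rw [Pi.mul_apply, hsub, Pi.sub_apply, hYm] at hpull
  exact hpull ▸ hmono

namespace VariableDrift

variable {f g : ℝ → ℝ} {xmin xmax : ℝ}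

theorem sub_eq_intervalIntegral (hf : AntitoneOn f (Icc xmin xmax))
    (hg : ∀ x, xmin ≤ x → g x = xmin * f xmin + ∫ y in xmin..x, f y)
    {a b : ℝ} (ha : a ∈ Icc xmin xmax) (hb : b ∈ Icc xmin xmax) :
    g b - g a = ∫ y in a..b, f y := by
  have hmin : xmin ∈ Icc xmin xmax := ⟨le_rfl, ha.1.trans ha.2⟩
  rw [hg b hb.1, hg a ha.1, ← intervalIntegral.integral_interval_sub_left
    (hf.intervalIntegrable_of_mem_Icc hmin hb) (hf.intervalIntegrable_of_mem_Icc hmin ha)]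
  ring

theorem concaveOn (hf : AntitoneOn f (Icc xmin xmax))
    (hg : ∀ x, xmin ≤ x → g x = xmin * f xmin + ∫ y in xmin..x, f y) :
    ConcaveOn ℝ (Icc xmin xmax) g := by
  refine concaveOn_of_slope_anti_adjacent (convex_Icc _ _) fun {x y z} hx hz hxy hyz => ?_
  have hy : y ∈ Icc xmin xmax := ⟨hx.1.trans hxy.le, hyz.le.trans hz.2⟩
  have hright : g z - g y ≤ (z - y) * f y := by
    rw [sub_eq_intervalIntegral hf hg hy hz]
    exact (hf.mono (Icc_subset_Icc hy.1 hz.2)).intervalIntegral_le_mul hyz.le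
  have hleft : (y - x) * f y ≤ g y - g x := by
    rw [sub_eq_intervalIntegral hf hg hx hy]
    exact (hf.mono (Icc_subset_Icc hx.1 hy.2)).mul_le_intervalIntegral hxy.le
  calc (g z - g y) / (z - y) ≤ f y := by rw [div_le_iff₀ (sub_pos.2 hyz)]; linarith
    _ ≤ (g y - g x) / (y - x) := by rw [le_div_iff₀ (sub_pos.2 hxy)]; linarith

theorem supergradient_of_mem_Icc (hf : AntitoneOn f (Icc xmin xmax))
    (hg : ∀ x, xmin ≤ x → g x = xmin * f xmin + ∫ y in xmin..x, f y)
    {x y : ℝ} (hx : x ∈ Icc xmin xmax) (hy : y ∈ Icc xmin xmax) :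
    (x - y) * f x ≤ g x - g y := by
  rcases le_total y x with hyx | hxy
  · rw [sub_eq_intervalIntegral hf hg hy hx]
    exact (hf.mono (Icc_subset_Icc hy.1 hx.2)).mul_le_intervalIntegral hyx
  · have hub := (hf.mono (Icc_subset_Icc hx.1 hy.2)).intervalIntegral_le_mul hxy
    rw [← sub_eq_intervalIntegral hf hg hx hy] at hub
    linarith

theorem supergradient (hxmin : 0 ≤ xmin) (hle : xmin ≤ xmax)
    (hf : AntitoneOn f (Icc xmin xmax))
    (hg : ∀ x, xmin ≤ x → g x = xmin * f xmin + ∫ y in xmin..x, f y) (hg0 : g 0 = 0)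
    {x y : ℝ} (hx : x ∈ insert 0 (Icc xmin xmax)) (hy : y ∈ insert 0 (Icc xmin xmax)) :
    (x - y) * f (projIcc xmin xmax hle x) ≤ g x - g y := by
  have hmin : xmin ∈ Icc xmin xmax := left_mem_Icc.2 hle
  have hgmin : g xmin = xmin * f xmin := by simp [hg xmin le_rfl]
  rcases hx with rfl | hx <;> rcases hy with rfl | hy
  · simp
  · have := supergradient_of_mem_Icc hf hg hmin hy
    rw [projIcc_of_le_left hle hxmin, hg0]
    linarith
  · have := supergradient_of_mem_Icc hf hg hx hmin
    have hfx : xmin * f x ≤ xmin * f xmin := mul_le_mul_of_nonneg_left (hf hmin hx hx.1) hxmin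
    rw [projIcc_of_mem hle hx, hg0]
    linarith
  · rw [projIcc_of_mem hle hx]
    exact supergradient_of_mem_Icc hf hg hx hy

theorem monotoneOn (hxmin : 0 ≤ xmin) (hle : xmin ≤ xmax)
    (hf : AntitoneOn f (Icc xmin xmax)) (hf0 : ∀ x ∈ Icc xmin xmax, 0 ≤ f x)
    (hg : ∀ x, xmin ≤ x → g x = xmin * f xmin + ∫ y in xmin..x, f y) (hg0 : g 0 = 0) :
    MonotoneOn g (insert 0 (Icc xmin xmax)) := fun x hx y hy hxy => by
  have := supergradient hxmin hle hf hg hg0 hy hx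
  have := mul_nonneg (sub_nonneg.2 hxy) (hf0 _ (projIcc xmin xmax hle y).2)
  linarith

end VariableDrift

open VariableDrift in
theorem variable_drift_jensen_step_general
    {Ω : Type*} [MeasurableSpace Ω] (μ : Measure Ω) [IsProbabilityMeasure μ]
    (X : ℕ → Ω → ℝ) (hX : ∀ t, StronglyMeasurable (X t))
    (xmin xmax : ℝ) (hxmin : 0 < xmin)
    (hstate : ∀ t ω, X t ω = 0 ∨ X t ω ∈ Set.Icc xmin xmax)
    (h : ℝ → ℝ) (hpos : ∀ x ∈ Set.Icc xmin xmax, 0 < h x)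
    (hmono : MonotoneOn h (Set.Icc xmin xmax))
    (g : ℝ → ℝ) (hg0 : g 0 = 0)
    (hg : ∀ x, xmin ≤ x → g x = xmin / h xmin + ∫ y in xmin..x, (h y)⁻¹) :
    ConcaveOn ℝ (Set.Icc xmin xmax) g ∧
    (∀ t, (∀ᵐ ω ∂μ, xmin ≤ X t ω →
        (μ[X (t + 1) | (MeasureTheory.Filtration.natural X hX) t]) ω
          ≤ X t ω - h (X t ω)) →
      ∀ᵐ ω ∂μ, xmin ≤ X t ω →
        1 ≤ (μ[(fun ω' => g (X t ω') - g (X (t + 1) ω')) |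
          (MeasureTheory.Filtration.natural X hX) t]) ω) := by
  have hf : AntitoneOn (fun y => (h y)⁻¹) (Icc xmin xmax) :=
    fun a ha b hb hab => inv_anti₀ (hpos a ha) (hmono ha hb hab)
  have hf0 : ∀ x ∈ Icc xmin xmax, 0 ≤ (h x)⁻¹ := fun x hx => inv_nonneg.2 (hpos x hx).le
  have hg' : ∀ x, xmin ≤ x → g x = xmin * (h xmin)⁻¹ + ∫ y in xmin..x, (h y)⁻¹ := hg
  refine ⟨concaveOn hf hg', fun t hdrift => ?_⟩
  have hXt : ∀ ω, xmin ≤ X t ω → X t ω ∈ Icc xmin xmax := fun ω hω =>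
    (hstate t ω).resolve_left fun h0 => by linarith
  rcases lt_or_ge xmax xmin with hlt | hle
  · exact ae_of_all _ fun ω hω => absurd ((hXt ω hω).1.trans (hXt ω hω).2) hlt.not_ge
  have hS0 := isLeast_insert_zero_Icc (b := xmax) hxmin.le
  have hSmax := isGreatest_insert_zero_Icc hxmin.le hle
  have hXi : ∀ s, Integrable (X s) μ := fun s =>
    monotoneOn_id.integrable_comp hS0 hSmax (hX s).measurable (hstate s)
  have hgi : ∀ s, Integrable (fun ω => g (X s ω)) μ := fun s =>
    (monotoneOn hxmin.le hle hf hf0 hg' hg0).integrable_comp hS0 hSmax (hX s).measurable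
      (hstate s)
  have hXtm := Filtration.stronglyAdapted_natural hX t
  filter_upwards [sub_condExp_mul_le_condExp ((Filtration.natural X hX).le t)
    ((hf.antitone_comp_projIcc hle).measurable.comp hXtm.measurable).stronglyMeasurable
    (fun ω => hf.norm_comp_projIcc_le hf0 hle (X t ω)) hXtm (hXi t) (hXi (t + 1))
    ((hgi t).sub (hgi (t + 1)))
    fun ω => supergradient hxmin.le hle hf hg' hg0 (hstate t ω) (hstate (t + 1) ω), hdrift]
    with ω hjensen hd hx
  rw [Function.comp_apply, projIcc_of_mem hle (hXt ω hx)] at hjensen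
  have hhX := hpos _ (hXt ω hx)
  calc 1 = h (X t ω) * (h (X t ω))⁻¹ := (mul_inv_cancel₀ hhX.ne').symm
    _ ≤ _ := mul_le_mul_of_nonneg_right (by linarith [hd hx]) (inv_nonneg.2 hhX.le)
    _ ≤ _ := hjensen

/-- Key step of the variable drift theorem. If `h : [xmin, xmax] → ℝ⁺` is monotone
increasing and `g x = xmin / h xmin + ∫_{xmin}^x 1/h(y) dy`, then `g` is concave
on `[xmin, xmax]`; moreover, for a process `(X t)` over `S ⊆ {0} ∪ [xmin, xmax]`,
if `E[X (t+1) | F_t] ≤ X t − h (X t)` (on `X t ≥ xmin`) then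
`E[g (X t) − g (X (t+1)) | F_t] ≥ 1` (on `X t ≥ xmin`). -/
theorem variable_drift_jensen_step
    {Ω : Type*} [MeasurableSpace Ω] (μ : Measure Ω) [IsProbabilityMeasure μ]
    (X : ℕ → Ω → ℝ) (hX : ∀ t, StronglyMeasurable (X t))
    (xmin xmax : ℝ) (hxmin : 0 < xmin)
    (hstate : ∀ t ω, X t ω = 0 ∨ X t ω ∈ Set.Icc xmin xmax)
    (h : ℝ → ℝ) (hpos : ∀ x ∈ Set.Icc xmin xmax, 0 < h x)
    (hmono : MonotoneOn h (Set.Icc xmin xmax))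
    (hint : IntegrableOn (fun y => (h y)⁻¹) (Set.Icc xmin xmax))
    (g : ℝ → ℝ) (hg0 : g 0 = 0)
    (hg : ∀ x, xmin ≤ x → g x = xmin / h xmin + ∫ y in xmin..x, (h y)⁻¹) :
    ConcaveOn ℝ (Set.Icc xmin xmax) g ∧
    (∀ t, (∀ᵐ ω ∂μ, xmin ≤ X t ω →
        (μ[X (t + 1) | (MeasureTheory.Filtration.natural X hX) t]) ω
          ≤ X t ω - h (X t ω)) →
      ∀ᵐ ω ∂μ, xmin ≤ X t ω →
        1 ≤ (μ[(fun ω' => g (X t ω') - g (X (t + 1) ω')) |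
          (MeasureTheory.Filtration.natural X hX) t]) ω) :=
  variable_drift_jensen_step_general μ X hX xmin xmax hxmin hstate h hpos hmono g hg0 hg
end

section
/- In the setting of Sudholt's fitness-level lower bound, for each level i and the potential g(m−i) = 1/u_i + χ ∑_{j=i+1}^{m−1} 1/u_j, the one-step drift satisfies E[g(X_t) − g(X_{t+1}) | X_t = m−i] ≤ 1; in particular, the key inequality ∑_{ℓ=i+1}^m γ_{i,ℓ} · χ · ∑_{j=i+1}^ℓ 1/u_j ≤ ∑_{ℓ=i+1}^m γ_{i,ℓ}/u_ℓ holds whenever γ_{i,j} ≥ χ ∑_{k=j}^m γ_{i,k} for all j > i. -/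
/-!
Exchanging the order of summation turns `χ ∑_ℓ γ_ℓ ∑_{j ≤ ℓ} w_j` into `∑_j w_j · χ ∑_{ℓ ≥ j} γ_ℓ`,
which the tail condition on `γ` bounds by `∑_j γ_j w_j` for any nonnegative weights `w`; for
`w = 1/u` this is the key inequality. With `w` the increments of the potential, the drift from
level `i` equals `u_i ∑_ℓ γ_ℓ (g_i - g_ℓ) = 1 + u_i (∑_ℓ γ_ℓ χ ∑_{j ≤ ℓ} w_j - ∑_ℓ γ_ℓ w_ℓ)`,
so the same inequality bounds it by `1`.
-/

open Finset

theorem sum_Icc_sum_Icc_comm {M : Type*} [AddCommMonoid M] (a m : ℕ) (f : ℕ → ℕ → M) :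
    ∑ ℓ ∈ Icc a m, ∑ j ∈ Icc a ℓ, f ℓ j = ∑ j ∈ Icc a m, ∑ ℓ ∈ Icc j m, f ℓ j :=
  sum_comm' fun ℓ j => by simp only [mem_Icc]; omega

section FitnessPotential

variable {R : Type*} [CommRing R]

/-- With `q k = 1 / u k` for `k < m` and `q m = 0` this is the potential `g(m - j)`; letting `q`
vanish at the top level makes `g(0) = 0` an instance of the same formula. -/
def fitnessPotential (χ : R) (q : ℕ → R) (m j : ℕ) : R :=
  q j + χ * ∑ k ∈ Icc (j + 1) m, q k

theorem fitnessPotential_eq_of_lt (χ : R) (v : ℕ → R) {m j : ℕ} (hj : j < m) :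
    fitnessPotential χ (fun k => if k < m then v k else 0) m j
      = v j + χ * ∑ k ∈ Ico (j + 1) m, v k := by
  rw [fitnessPotential, ← Ico_add_one_right_eq_Icc, sum_Ico_succ_top (by omega), if_pos hj,
    if_neg (lt_irrefl m), add_zero, sum_congr rfl fun k hk => if_pos (mem_Ico.1 hk).2]

theorem fitnessPotential_sub {χ : R} {q : ℕ → R} {m i ℓ : ℕ} (hiℓ : i ≤ ℓ) (hℓm : ℓ ≤ m) :
    fitnessPotential χ q m i - fitnessPotential χ q m ℓ
      = q i - q ℓ + χ * ∑ k ∈ Icc (i + 1) ℓ, q k := by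
  simp only [fitnessPotential, Icc_add_one_left_eq_Ioc, ← sum_Ioc_consecutive q hiℓ hℓm]
  ring

variable [PartialOrder R] [IsOrderedRing R]

theorem sum_mul_prefix_sum_le_of_tail_le {a m : ℕ} {χ : R} {γ w : ℕ → R}
    (hw : ∀ j ∈ Icc a m, 0 ≤ w j) (hχ : ∀ j ∈ Icc a m, χ * ∑ k ∈ Icc j m, γ k ≤ γ j) :
    ∑ ℓ ∈ Icc a m, γ ℓ * (χ * ∑ j ∈ Icc a ℓ, w j) ≤ ∑ ℓ ∈ Icc a m, γ ℓ * w ℓ :=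
  calc ∑ ℓ ∈ Icc a m, γ ℓ * (χ * ∑ j ∈ Icc a ℓ, w j)
      = ∑ j ∈ Icc a m, (χ * ∑ ℓ ∈ Icc j m, γ ℓ) * w j := by
        simp_rw [mul_left_comm _ χ, mul_sum, sum_Icc_sum_Icc_comm, sum_mul]
        exact sum_congr rfl fun _ _ => sum_congr rfl fun _ _ => by ring
    _ ≤ ∑ j ∈ Icc a m, γ j * w j :=
        sum_le_sum fun j hj => mul_le_mul_of_nonneg_right (hχ j hj) (hw j hj)

theorem sum_mul_fitnessPotential_sub_le_one {m i : ℕ} {c χ : R} {γ q : ℕ → R}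
    (hc : 0 ≤ c) (hcq : c * q i = 1) (hγ : ∑ ℓ ∈ Icc (i + 1) m, γ ℓ = 1)
    (hq : ∀ j ∈ Icc (i + 1) m, 0 ≤ q j)
    (hχ : ∀ j ∈ Icc (i + 1) m, χ * ∑ k ∈ Icc j m, γ k ≤ γ j) :
    ∑ ℓ ∈ Icc (i + 1) m, c * γ ℓ * (fitnessPotential χ q m i - fitnessPotential χ q m ℓ)
      ≤ 1 := by
  have hterm : ∀ ℓ ∈ Icc (i + 1) m,
      c * γ ℓ * (fitnessPotential χ q m i - fitnessPotential χ q m ℓ)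
        = c * q i * γ ℓ + c * (γ ℓ * (χ * ∑ k ∈ Icc (i + 1) ℓ, q k) - γ ℓ * q ℓ) :=
    fun ℓ hℓ => by
      rw [fitnessPotential_sub (by grind) (mem_Icc.1 hℓ).2]
      ring
  rw [sum_congr rfl hterm, sum_add_distrib, ← mul_sum, hcq, hγ, one_mul, ← mul_sum,
    sum_sub_distrib, add_le_iff_nonpos_right]
  exact mul_nonpos_of_nonneg_of_nonpos hc (sub_nonpos.2 (sum_mul_prefix_sum_le_of_tail_le hq hχ))

end FitnessPotential

theorem fitness_levels_drift_at_most_one_general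
    (m i : ℕ) (hi1 : 1 ≤ i) (him : i < m)
    (u : ℕ → ℝ) (hu : ∀ j, 1 ≤ j → j ≤ m → 0 < u j)
    (γ : ℕ → ℕ → ℝ)
    (hγsum : ∑ ℓ ∈ Finset.Icc (i + 1) m, γ i ℓ = 1)
    (χ : ℝ)
    (hχ : ∀ j, i < j → j ≤ m → χ * ∑ k ∈ Finset.Icc j m, γ i k ≤ γ i j)
    (pot : ℕ → ℝ)
    (hpot : ∀ j, 1 ≤ j → j < m →
      pot j = 1 / u j + χ * ∑ k ∈ Finset.Ico (j + 1) m, 1 / u k)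
    (hpotm : pot m = 0) :
    (∑ ℓ ∈ Finset.Icc (i + 1) m, u i * γ i ℓ * (pot i - pot ℓ) ≤ 1) ∧
    (∑ ℓ ∈ Finset.Icc (i + 1) m, γ i ℓ * (χ * ∑ j ∈ Finset.Icc (i + 1) ℓ, 1 / u j)
      ≤ ∑ ℓ ∈ Finset.Icc (i + 1) m, γ i ℓ / u ℓ) := by
  set q : ℕ → ℝ := fun k => if k < m then 1 / u k else 0
  have hpot_eq : ∀ j, 1 ≤ j → j ≤ m → pot j = fitnessPotential χ q m j := by
    intro j hj1 hjm
    rcases hjm.lt_or_eq with hjm | rfl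
    · rw [hpot j hj1 hjm, fitnessPotential_eq_of_lt χ _ hjm]
    · simp [hpotm, fitnessPotential, q]
  have hu_pos : ∀ j ∈ Icc (i + 1) m, 0 < 1 / u j := fun j hj =>
    one_div_pos.2 (hu j (by grind) (mem_Icc.1 hj).2)
  have hχ_tail : ∀ j ∈ Icc (i + 1) m, χ * ∑ k ∈ Icc j m, γ i k ≤ γ i j := fun j hj =>
    hχ j (by grind) (mem_Icc.1 hj).2
  refine ⟨?_, ?_⟩
  · have hui := hu i hi1 him.le
    rw [sum_congr rfl fun ℓ hℓ => by
      rw [hpot_eq i hi1 him.le, hpot_eq ℓ (by grind) (mem_Icc.1 hℓ).2]]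
    refine sum_mul_fitnessPotential_sub_le_one hui.le (by simp [q, him, hui.ne']) hγsum
      (fun j hj => ?_) hχ_tail
    simp only [q]
    split_ifs
    exacts [(hu_pos j hj).le, le_rfl]
  · simp_rw [div_eq_mul_one_div (γ i _)]
    exact sum_mul_prefix_sum_le_of_tail_le (fun j hj => (hu_pos j hj).le) hχ_tail

/-- Drift computation in Sudholt's fitness-level lower bound. With the potential
`g(m−i) = 1/u i + χ ∑_{j=i+1}^{m−1} 1/u j` (and `g 0 = 0`, i.e. potential `0` at
level `m`), transition probabilities `u i * γ i ℓ` from level `i` to `ℓ > i`,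
`∑_{ℓ=i+1}^m γ i ℓ = 1` and `γ i j ≥ χ ∑_{k=j}^m γ i k` for `j > i`, the one-step
drift of the potential from level `i` is at most `1`; in particular the key
inequality `∑_{ℓ=i+1}^m γ i ℓ · χ · ∑_{j=i+1}^ℓ 1/u j ≤ ∑_{ℓ=i+1}^m γ i ℓ / u ℓ`
holds. -/
theorem fitness_levels_drift_at_most_one
    (m i : ℕ) (hi1 : 1 ≤ i) (him : i < m)
    (u : ℕ → ℝ) (hu : ∀ j, 1 ≤ j → j ≤ m → 0 < u j)
    (γ : ℕ → ℕ → ℝ) (hγnonneg : ∀ j, 0 ≤ γ i j)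
    (hγsum : ∑ ℓ ∈ Finset.Icc (i + 1) m, γ i ℓ = 1)
    (χ : ℝ) (hχ0 : 0 ≤ χ) (hχ1 : χ ≤ 1)
    (hχ : ∀ j, i < j → j ≤ m → χ * ∑ k ∈ Finset.Icc j m, γ i k ≤ γ i j)
    (pot : ℕ → ℝ)
    (hpot : ∀ j, 1 ≤ j → j < m →
      pot j = 1 / u j + χ * ∑ k ∈ Finset.Ico (j + 1) m, 1 / u k)
    (hpotm : pot m = 0) :
    (∑ ℓ ∈ Finset.Icc (i + 1) m, u i * γ i ℓ * (pot i - pot ℓ) ≤ 1) ∧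
    (∑ ℓ ∈ Finset.Icc (i + 1) m, γ i ℓ * (χ * ∑ j ∈ Finset.Icc (i + 1) ℓ, 1 / u j)
      ≤ ∑ ℓ ∈ Finset.Icc (i + 1) m, γ i ℓ / u ℓ) :=
  fitness_levels_drift_at_most_one_general m i hi1 him u hu γ hγsum χ hχ pot hpot hpotm
end

section
/- Let X_t denote the number of zero-bits of the current search point of the (1+1) EA on OneMax over {0,1}^n (standard bit mutation with rate 1/n, elitist selection). Then for 1 ≤ x ≤ n: (1 − 1/n)^{n−x} · (x/n) ≤ E[X_t − X_{t+1} | X_t = x] ≤ ((1 − 1/n)(1 + x/(n−1)²))^{n−x} · (x/n). -/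
/-- Number of zero-bits of a search point. -/
def zeros {n : ℕ} (p : Fin n → Bool) : ℕ :=
  (Finset.univ.filter fun i => p i = false).card

/-- Hamming weight of a flip-mask. -/
def flipWeight {n : ℕ} (b : Fin n → Bool) : ℕ :=
  (Finset.univ.filter fun i => b i = true).card

/-- Offspring obtained by flipping the bits indicated by the mask `b`. -/
def mutate {n : ℕ} (p b : Fin n → Bool) : Fin n → Bool :=
  fun i => xor (p i) (b i)

/-- One step of the (1+1) EA on OneMax (elitist selection: the offspring is
accepted iff its OneMax-value is at least as large, i.e. iff it has at most as
many zeros). -/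
def oneMaxStep {n : ℕ} (p b : Fin n → Bool) : Fin n → Bool :=
  if zeros (mutate p b) ≤ zeros p then mutate p b else p

/-- Expected one-step decrease of the number of zeros of the (1+1) EA on OneMax
(standard bit mutation with rate `1/n`), i.e. `E[X t − X (t+1) | X t = zeros p]`
for a current search point `p`. -/
noncomputable def oneMaxDrift {n : ℕ} (p : Fin n → Bool) : ℝ :=
  ∑ b : Fin n → Bool,
    ((1 / n : ℝ) ^ flipWeight b * (1 - 1 / n) ^ (n - flipWeight b)) *
      ((zeros p : ℝ) - (zeros (oneMaxStep p b) : ℝ))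

/-! Write `x` for the number of zeros and `m = n - x` for the number of ones. A mutation flips
`s ~ Bin(x, 1/n)` zeros and, independently, `t ~ Bin(m, 1/n)` ones, and selection turns this into
a decrease of `(s - t)⁺` zeros, so the drift is `E[(s - t)⁺]`. Keeping only the event `t = 0`
gives the lower bound `(1 - 1/n)^m · E[s]`. For the upper bound, `(s - t)⁺ ≤ C(s, t + 1)`, whose
mean is `C(x, t + 1) / n^(t+1) ≤ (x/n) (x/(n-1))^t`; averaging over `t` with the binomial
theorem gives `(x/n) (1 - 1/n + x/(n(n-1)))^m`. -/

open Finset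

theorem sum_range_choose_mul_choose_mul_pow {R : Type*} [CommSemiring R] (k j : ℕ) (y z : R) :
    ∑ a ∈ range (k + 1), (k.choose a * a.choose j : R) * y ^ a * z ^ (k - a) =
      k.choose j * y ^ j * (y + z) ^ (k - j) := by
  obtain hkj | hjk := lt_or_ge k j
  · rw [Nat.choose_eq_zero_of_lt hkj, Nat.cast_zero, zero_mul, zero_mul]
    refine sum_eq_zero fun a ha => ?_
    rw [Nat.choose_eq_zero_of_lt (n := a) (k := j) (by grind)]
    simp
  obtain ⟨d, rfl⟩ := Nat.exists_eq_add_of_le hjk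
  have hlow : ∑ a ∈ range j,
      ((j + d).choose a * a.choose j : R) * y ^ a * z ^ (j + d - a) = 0 :=
    sum_eq_zero fun a ha => by simp [Nat.choose_eq_zero_of_lt (mem_range.mp ha)]
  rw [show j + d + 1 = j + (d + 1) by ring, sum_range_add, hlow, zero_add, add_pow, mul_sum,
    Nat.add_sub_cancel_left]
  refine sum_congr rfl fun i _ => ?_
  have hchoose : ((j + d).choose (j + i) * (j + i).choose j : R) =
      (j + d).choose j * d.choose i := by
    rw [← Nat.cast_mul, Nat.choose_mul (Nat.le_add_right j i)]
    simp
  rw [hchoose, pow_add, show j + d - (j + i) = d - i by omega]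
  ring

theorem Nat.sub_le_choose_succ (a b : ℕ) : a - b ≤ a.choose (b + 1) := by
  induction b generalizing a with
  | zero => simp
  | succ b ih =>
    cases a with
    | zero => simp
    | succ a =>
      rw [Nat.choose_succ_succ]
      have := ih a
      omega

section BinomialWeight

variable {R : Type*} [CommRing R]

def binomialWeight (k : ℕ) (q : R) (i : ℕ) : R :=
  k.choose i * q ^ i * (1 - q) ^ (k - i)

theorem sum_powerset_eq_sum_binomialWeight {α : Type*} (s : Finset α) (q : R)
    (f : ℕ → R) :
    ∑ S ∈ s.powerset, q ^ #S * (1 - q) ^ (#s - #S) * f #S =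
      ∑ i ∈ range (#s + 1), binomialWeight #s q i * f i := by
  rw [sum_powerset_apply_card (fun i => q ^ i * (1 - q) ^ (#s - i) * f i)]
  simp only [binomialWeight, nsmul_eq_mul, mul_assoc]

theorem sum_binomialWeight_mul_choose (k j : ℕ) (q : R) :
    ∑ a ∈ range (k + 1), binomialWeight k q a * a.choose j = k.choose j * q ^ j := by
  have h := sum_range_choose_mul_choose_mul_pow k j q (1 - q)
  rw [add_sub_cancel, one_pow, mul_one] at h
  rw [← h]
  refine sum_congr rfl fun a _ => ?_
  rw [binomialWeight]
  ring

theorem sum_binomialWeight_mul_cast (k : ℕ) (q : R) :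
    ∑ a ∈ range (k + 1), binomialWeight k q a * a = k * q := by
  simpa using sum_binomialWeight_mul_choose k 1 q

theorem sum_binomialWeight_mul_pow (k : ℕ) (q r : R) :
    ∑ i ∈ range (k + 1), binomialWeight k q i * r ^ i = (q * r + (1 - q)) ^ k := by
  rw [add_pow]
  refine sum_congr rfl fun i _ => ?_
  rw [binomialWeight, mul_pow]
  ring

variable [LinearOrder R] [IsStrictOrderedRing R] {q : R}

theorem binomialWeight_nonneg (hq₀ : 0 ≤ q) (hq₁ : q ≤ 1) (k i : ℕ) :
    0 ≤ binomialWeight k q i := by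
  have : 0 ≤ 1 - q := sub_nonneg.mpr hq₁
  unfold binomialWeight
  positivity

theorem sum_binomialWeight_mul_sub_le (hq₀ : 0 ≤ q) (hq₁ : q ≤ 1) (k t : ℕ) :
    ∑ s ∈ range (k + 1), binomialWeight k q s * ((s - t : ℕ) : R) ≤
      k.choose (t + 1) * q ^ (t + 1) := by
  rw [← sum_binomialWeight_mul_choose]
  gcongr with s
  · exact binomialWeight_nonneg hq₀ hq₁ k s
  · exact_mod_cast Nat.sub_le_choose_succ s t

end BinomialWeight

theorem one_div_natCast_mem_Icc {α : Type*} [Semifield α] [LinearOrder α] [IsStrictOrderedRing α]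
    (n : ℕ) : (1 / n : α) ∈ Set.Icc 0 1 :=
  ⟨by positivity, one_div (n : α) ▸ Nat.cast_inv_le_one n⟩

-- For `n ≤ 1` both sides are junk values (`x / 0 = 0`) that happen to agree.
theorem one_div_mul_div_add_one_sub_one_div {n x : ℕ} (hx : x ≤ n) :
    (1 / n : ℝ) * (x / (n - 1)) + (1 - 1 / n) = (1 - 1 / n) * (1 + x / ((n : ℝ) - 1) ^ 2) := by
  rcases n with _ | _ | n
  · obtain rfl : x = 0 := Nat.le_zero.mp hx
    simp
  · simp
  · push_cast
    field_simp
    ring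

theorem sum_filter_filter_compl_eq_sum_powerset_product {ι M : Type*} [Fintype ι] [DecidableEq ι]
    [AddCommMonoid M] (A : Finset ι) (g : Finset ι × Finset ι → M) :
    ∑ b : ι → Bool, g ({i ∈ A | b i = true}, {i ∈ Aᶜ | b i = true}) =
      ∑ ST ∈ A.powerset ×ˢ Aᶜ.powerset, g ST := by
  refine sum_nbij' (fun b => ({i ∈ A | b i = true}, {i ∈ Aᶜ | b i = true}))
    (fun ST i => decide (i ∈ ST.1 ∪ ST.2)) ?_ ?_ ?_ ?_ fun _ _ => rfl
  · simp [filter_subset]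
  · simp
  · intro b _
    funext i
    by_cases hi : i ∈ A <;> simp [hi]
  · rintro ⟨S, T⟩ hST
    rw [mem_product, mem_powerset, mem_powerset] at hST
    ext i <;> simp only [mem_filter, mem_union, decide_eq_true_eq] <;> grind [mem_compl]

section OneMax

variable {n : ℕ} (p b : Fin n → Bool)

def zeroBits : Finset (Fin n) := {i | p i = false}

def flippedZeros : Finset (Fin n) := {i ∈ zeroBits p | b i = true}

def flippedOnes : Finset (Fin n) := {i ∈ (zeroBits p)ᶜ | b i = true}

theorem card_zeroBits : #(zeroBits p) = zeros p := rfl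

theorem card_compl_zeroBits : #(zeroBits p)ᶜ = n - zeros p := by
  rw [card_compl, Fintype.card_fin, card_zeroBits]

theorem zeros_le : zeros p ≤ n :=
  (card_le_univ _).trans_eq (Fintype.card_fin n)

theorem flipWeight_eq : flipWeight b = #(flippedZeros p b) + #(flippedOnes p b) := by
  rw [flipWeight, ← card_filter_add_card_filter_not (· ∈ zeroBits p)]
  congr 2 <;> ext i <;>
    simp only [flippedZeros, flippedOnes, mem_filter, mem_univ, true_and, mem_compl] <;> tauto

theorem zeros_mutate_add :
    zeros (mutate p b) + #(flippedZeros p b) = zeros p + #(flippedOnes p b) := by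
  have hmut := card_filter_add_card_filter_not (s := {i | mutate p b i = false})
    (· ∈ zeroBits p)
  have hzero := card_filter_add_card_filter_not (s := zeroBits p) (b · = true)
  have hstay : ({i ∈ {i | mutate p b i = false} | i ∈ zeroBits p} : Finset (Fin n)) =
      {i ∈ zeroBits p | ¬b i = true} := by
    ext i
    simp only [zeroBits, mutate, mem_filter, mem_univ, true_and]
    grind
  have hflip : ({i ∈ {i | mutate p b i = false} | i ∉ zeroBits p} : Finset (Fin n)) =
      flippedOnes p b := by
    ext i
    simp only [zeroBits, flippedOnes, mutate, mem_filter, mem_univ, true_and, mem_compl]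
    grind
  rw [zeros, ← hmut, hstay, hflip, ← card_zeroBits, ← hzero, flippedZeros]
  omega

theorem zeros_oneMaxStep :
    zeros (oneMaxStep p b) = zeros p - (#(flippedZeros p b) - #(flippedOnes p b)) := by
  have := zeros_mutate_add p b
  unfold oneMaxStep
  split_ifs <;> omega

-- The truncated difference `s - t` is the decrease `(s - t)⁺` caused by flipping `s` zeros and
-- `t` ones.
theorem oneMaxDrift_eq_sum_binomialWeight :
    oneMaxDrift p = ∑ t ∈ range (n - zeros p + 1), binomialWeight (n - zeros p) (1 / n : ℝ) t *
      ∑ s ∈ range (zeros p + 1), binomialWeight (zeros p) (1 / n : ℝ) s * ((s - t : ℕ) : ℝ) := by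
  set q : ℝ := 1 / n
  let G : Finset (Fin n) × Finset (Fin n) → ℝ := fun ST =>
    q ^ #ST.2 * (1 - q) ^ (#(zeroBits p)ᶜ - #ST.2) *
      (q ^ #ST.1 * (1 - q) ^ (#(zeroBits p) - #ST.1) * ((#ST.1 - #ST.2 : ℕ) : ℝ))
  have hterm (b : Fin n → Bool) :
      (q ^ flipWeight b * (1 - q) ^ (n - flipWeight b)) *
        ((zeros p : ℝ) - (zeros (oneMaxStep p b) : ℝ)) =
        G (flippedZeros p b, flippedOnes p b) := by
    have hs : #(flippedZeros p b) ≤ #(zeroBits p) := card_le_card (filter_subset _ _)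
    have ht : #(flippedOnes p b) ≤ #(zeroBits p)ᶜ := card_le_card (filter_subset _ _)
    have hx := zeros_le p
    simp only [G]
    rw [card_compl_zeroBits] at ht ⊢
    rw [card_zeroBits] at hs ⊢
    rw [flipWeight_eq p b, zeros_oneMaxStep, Nat.cast_sub (by omega),
      show n - (#(flippedZeros p b) + #(flippedOnes p b)) =
        (zeros p - #(flippedZeros p b)) + (n - zeros p - #(flippedOnes p b)) by omega]
    ring
  rw [oneMaxDrift, sum_congr rfl fun b _ => hterm b]
  unfold flippedZeros flippedOnes
  rw [sum_filter_filter_compl_eq_sum_powerset_product, sum_product_right]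
  simp only [G, ← mul_sum]
  rw [← card_compl_zeroBits, ← card_zeroBits, ← sum_powerset_eq_sum_binomialWeight]
  refine sum_congr rfl fun T _ => ?_
  rw [← sum_powerset_eq_sum_binomialWeight]

theorem le_oneMaxDrift : (1 - 1 / (n : ℝ)) ^ (n - zeros p) * (zeros p / n) ≤ oneMaxDrift p := by
  obtain ⟨hq₀, hq₁⟩ := one_div_natCast_mem_Icc (α := ℝ) n
  rw [oneMaxDrift_eq_sum_binomialWeight, sum_range_succ']
  refine le_add_of_nonneg_of_le (sum_nonneg fun t _ => mul_nonneg
    (binomialWeight_nonneg hq₀ hq₁ _ _)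
    (sum_nonneg fun s _ => mul_nonneg (binomialWeight_nonneg hq₀ hq₁ _ _) (Nat.cast_nonneg _)))
    (le_of_eq ?_)
  simp only [Nat.sub_zero]
  rw [sum_binomialWeight_mul_cast, binomialWeight, Nat.choose_zero_right, Nat.sub_zero]
  ring

theorem oneMaxDrift_le :
    oneMaxDrift p ≤ ((1 - 1 / (n : ℝ)) * (1 + (zeros p : ℝ) / ((n : ℝ) - 1) ^ 2)) ^ (n - zeros p) *
      (zeros p / n) := by
  obtain ⟨hq₀, hq₁⟩ := one_div_natCast_mem_Icc (α := ℝ) n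
  set x := zeros p
  set q : ℝ := 1 / n
  have hgain (t : ℕ) (ht : t ∈ range (n - x + 1)) :
      ∑ s ∈ range (x + 1), binomialWeight x q s * ((s - t : ℕ) : ℝ) ≤
        x * q * (x / (n - 1)) ^ t := by
    have hpow : (x * q) ^ t ≤ (x / (n - 1) : ℝ) ^ t := by
      rcases Nat.eq_zero_or_pos t with rfl | ht₀
      · simp
      have hxn : x + 1 ≤ n := by grind
      rcases Nat.eq_zero_or_pos x with hx₀ | hx₀
      · simp [hx₀]
      have hn : (2 : ℝ) ≤ n := by exact_mod_cast (by omega : 2 ≤ n)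
      gcongr
      rw [mul_one_div]
      exact div_le_div_of_nonneg_left (Nat.cast_nonneg _) (by linarith) (by linarith)
    calc ∑ s ∈ range (x + 1), binomialWeight x q s * ((s - t : ℕ) : ℝ)
        ≤ x.choose (t + 1) * q ^ (t + 1) := sum_binomialWeight_mul_sub_le hq₀ hq₁ x t
      _ ≤ x ^ (t + 1) * q ^ (t + 1) := by gcongr; exact_mod_cast Nat.choose_le_pow x (t + 1)
      _ = x * q * (x * q) ^ t := by ring
      _ ≤ x * q * (x / (n - 1)) ^ t := by gcongr
  rw [oneMaxDrift_eq_sum_binomialWeight]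
  calc _ ≤ ∑ t ∈ range (n - x + 1), binomialWeight (n - x) q t * (x * q * (x / (n - 1)) ^ t) :=
        sum_le_sum fun t ht =>
          mul_le_mul_of_nonneg_left (hgain t ht) (binomialWeight_nonneg hq₀ hq₁ _ _)
    _ = (q * (x / (n - 1)) + (1 - q)) ^ (n - x) * (x * q) := by
        rw [← sum_binomialWeight_mul_pow, sum_mul]
        refine sum_congr rfl fun t _ => by ring
    _ = _ := by rw [one_div_mul_div_add_one_sub_one_div (zeros_le p), mul_one_div]

end OneMax

theorem oneMax_drift_bounds_general (n : ℕ) (x : ℕ)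
    (p : Fin n → Bool) (hp : zeros p = x) :
    (1 - 1 / (n : ℝ)) ^ (n - x) * (x / n) ≤ oneMaxDrift p ∧
    oneMaxDrift p ≤
      ((1 - 1 / (n : ℝ)) * (1 + (x : ℝ) / ((n : ℝ) - 1) ^ 2)) ^ (n - x) *
        (x / n) := by
  subst hp
  exact ⟨le_oneMaxDrift p, oneMaxDrift_le p⟩

/-- Drift bounds for the (1+1) EA on OneMax: if the current search point has
`x` zeros, `1 ≤ x ≤ n`, then
`(1 − 1/n)^{n−x} · x/n ≤ E[X t − X (t+1) | X t = x]
  ≤ ((1 − 1/n)(1 + x/(n−1)²))^{n−x} · x/n`. -/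
theorem oneMax_drift_bounds (n : ℕ) (x : ℕ) (hx1 : 1 ≤ x) (hxn : x ≤ n)
    (p : Fin n → Bool) (hp : zeros p = x) :
    (1 - 1 / (n : ℝ)) ^ (n - x) * (x / n) ≤ oneMaxDrift p ∧
    oneMaxDrift p ≤
      ((1 - 1 / (n : ℝ)) * (1 + (x : ℝ) / ((n : ℝ) - 1) ^ 2)) ^ (n - x) *
        (x / n) :=
  oneMax_drift_bounds_general n x p hp
end
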